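/- arXiv:1405.4892 — 4 statements merged into one kernel-verified Lean document; each statement's English description precedes it below -/
import Mathlib

section
/- Let w = (uav')^k u, where u, v' ∈ Σ*, a ∈ Σ, k ≥ 1 and uav' is a Lyndon word. If a' ∈ Σ and a > a', then wa' ∉ P'. -/
variable {α : Type*}

/-- The rotation `rot(w,i) = w[i..|w|-1] w[0..i-1]`. -/
def rot (w : List α) (i : ℕ) : List α := w.drop i ++ w.take i

/-- A Lyndon word: a nonempty word strictly smaller than all of its proper rotations. -/
def IsLyndon [LinearOrder α] (w : List α) : Prop :=
  w ≠ [] ∧ ∀ i, 0 < i → i < w.length → w < rot w i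

/-- `IsCFL w f` : `f` is the Chen–Fox–Lyndon factorization of `w`, i.e. a
nonincreasing sequence of Lyndon words whose concatenation is `w`. -/
def IsCFL [LinearOrder α] (w : List α) (f : List (List α)) : Prop :=
  f.flatten = w ∧ (∀ x ∈ f, IsLyndon x) ∧ f.Chain' (· ≥ ·)

/-- `u^k` : the `k`-fold concatenation of the word `u`. -/
def listPow (u : List α) (k : ℕ) : List α := (List.replicate k u).flatten

/-- `P`: the set of nonempty prefixes of Lyndon words. -/
def InP [LinearOrder α] (w : List α) : Prop :=
  w ≠ [] ∧ ∃ u : List α, IsLyndon (w ++ u)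

/-- `P' = P ∪ { c^k : k ≥ 2 }` where `c` is the maximum symbol of the alphabet. -/
def InP' [LinearOrder α] (w : List α) : Prop :=
  InP w ∨ ∃ (c : α) (k : ℕ), 2 ≤ k ∧ (∀ a : α, a ≤ c) ∧ w = List.replicate k c

/-- A border of `w`: a proper prefix of `w` that is also a suffix of `w`. -/
def IsBorder (b w : List α) : Prop := b <+: w ∧ b <:+ w ∧ b.length < w.length

/-- The length of the longest common prefix of two words. -/
def lcpLen [DecidableEq α] : List α → List α → ℕ
  | a :: u, b :: v => if a = b then lcpLen u v + 1 else 0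
  | _, _ => 0


private lemma lex_mid_lt [LinearOrder α] (p x y : List α) {b c : α} (h : b < c) :
    p ++ b :: x < p ++ c :: y := by
  show List.Lex (· < ·) _ _
  induction p with
  | nil => exact List.Lex.rel h
  | cons hd tl ih => exact List.Lex.cons ih

private lemma listPow_length (m : List α) (k : ℕ) :
    (listPow m k).length = k * m.length := by
  induction k with
  | zero => simp [listPow]
  | succ n ih =>
    simp only [listPow, List.replicate_succ, List.flatten_cons, List.length_append] at ih ⊢
    rw [ih]; ring

private lemma listPow_succ (m : List α) (k : ℕ) :
    listPow m (k + 1) = m ++ listPow m k := by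
  simp [listPow, List.replicate_succ]

private lemma mem_listPow_of_mem {m : List α} {x : α} (hx : x ∈ m) {k : ℕ} (hk : 1 ≤ k) :
    x ∈ listPow m k := by
  obtain ⟨k', rfl⟩ := Nat.exists_eq_add_of_le hk
  rw [Nat.add_comm, listPow_succ]
  exact List.mem_append_left _ hx

/-- For `w = (uav')^k u` with `uav'` a Lyndon word and `k ≥ 1`:
if `a > a'` then `wa' ∉ P'`. -/
theorem ext_smaller_not_P' [LinearOrder α] (u v' : List α) (a a' : α) (k : ℕ)
    (hk : 1 ≤ k) (hL : IsLyndon (u ++ a :: v')) (ha : a' < a) :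
    ¬ InP' (listPow (u ++ a :: v') k ++ u ++ [a']) := by
  set m : List α := u ++ a :: v' with hm
  rintro (⟨hne, t, hLy⟩ | ⟨c, k₂, hk₂, hmax, heq⟩)
  · -- Case: wa' is a prefix of a Lyndon word
    set L : List α := (listPow m k ++ u ++ [a']) ++ t with hLdef
    have hLeq : L = listPow m k ++ ((u ++ [a']) ++ t) := by
      simp [hLdef, List.append_assoc]
    set i : ℕ := k * m.length with hi
    have hmlen : 0 < m.length := by simp [hm]
    have hipos : 0 < i := Nat.mul_pos hk hmlen
    have hiLt : i < L.length := by
      have : L.length = i + (u.length + 1 + t.length) := by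
        simp [hLeq, listPow_length, hi]
        try omega
      omega
    have h1 : L < rot L i := hLy.2 i hipos hiLt
    have hrot : rot L i = ((u ++ [a']) ++ t) ++ listPow m k := by
      have hlen : (listPow m k).length = i := listPow_length m k
      rw [rot, hLeq, ← hlen, List.drop_left, List.take_left]
    have h2 : rot L i < L := by
      rw [hrot, hLeq]
      obtain ⟨k', rfl⟩ := Nat.exists_eq_add_of_le hk
      rw [Nat.add_comm, listPow_succ]
      have key := lex_mid_lt u (t ++ (m ++ listPow m k'))
        (v' ++ (listPow m k' ++ (u ++ [a'] ++ t))) ha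
      simpa [hm, List.append_assoc] using key
    exact absurd h2 (not_lt_of_gt h1)
  · -- Case: wa' = c^k₂ with c the maximum symbol
    have hamem : a ∈ listPow m k ++ u ++ [a'] := by
      apply List.mem_append_left
      apply List.mem_append_left
      exact mem_listPow_of_mem (by simp [hm]) hk
    have ha'mem : a' ∈ listPow m k ++ u ++ [a'] := by simp
    rw [heq] at hamem ha'mem
    have h1 := List.eq_of_mem_replicate hamem
    have h2 := List.eq_of_mem_replicate ha'mem
    rw [h1, h2] at ha
    exact lt_irrefl _ ha
end

section
/- Let w be a nonempty word with Lyndon factorization CFL(w) = w₁, w₂, …, w_m. Then |w₁| = min { j > 0 : suf(w,j) < w } (with the convention that the empty suffix suf(w,|w|) satisfies suf(w,|w|) < w), and w₁ = w₂ = ⋯ = w_k = w[0..|w₁|-1], where k = 1 + ⌊ lcp(w, suf(w,|w₁|)) / |w₁| ⌋. -/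
variable {α : Type*}

/-! A Lyndon word is unbordered, hence strictly smaller than each of its proper suffixes; so a
suffix of `w` starting inside `w₁` is larger than `w`. A nonincreasing product of Lyndon words
whose first factor is smaller than a Lyndon word `v` is itself smaller than `v`. Hence the suffix
of `w` after `w₁` is smaller than `w`: strip the factors equal to `w₁` and meet one that is smaller.
The same picture computes `lcp(w, suf(w,|w₁|))`: each further copy of `w₁` adds `|w₁|` to it, and
the first smaller factor ends it before `|w₁|` more symbols. -/

namespace List

variable [LinearOrder α]

theorem nil_lt_of_ne_nil {v : List α} (hv : v ≠ []) : [] < v := by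
  obtain ⟨a, l, rfl⟩ := exists_cons_of_ne_nil hv
  exact nil_lt_cons a l

theorem append_lt_append_left_iff (u : List α) {a b : List α} : u ++ a < u ++ b ↔ a < b :=
  ⟨fun h => lt_of_not_ge fun hba => append_left_le (not_lt.mpr hba) h, append_left_lt⟩

theorem append_lt_append_of_not_prefix {u v : List α} (h : u < v) (hp : ¬ u <+: v)
    (s t : List α) : u ++ s < v ++ t := by
  induction h with
  | nil => exact absurd nil_prefix hp
  | cons _ ih => exact Lex.cons (ih fun hpre => hp (cons_prefix_cons.mpr ⟨rfl, hpre⟩))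
  | rel hab => exact Lex.rel hab

theorem append_lt_append_of_length_le {u v : List α} (h : u < v) (hl : v.length ≤ u.length)
    (s t : List α) : u ++ s < v ++ t :=
  append_lt_append_of_not_prefix h (fun hp => h.ne (hp.eq_of_length (hp.length_le.antisymm hl)))
    s t

end List

section Lyndon

variable [LinearOrder α] {v : List α}

/-- If the suffix `s = v[j..]` were a prefix, then `v = s ++ v[i..]` with `i = |v| - j`, and
comparing `v` with its rotations by `j` and by `i` gives `v[i..] < v[..j]` and the reverse. -/
theorem IsLyndon.not_drop_prefix (hv : IsLyndon v) {j : ℕ} (hj : 0 < j) (hjv : j < v.length) :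
    ¬ v.drop j <+: v := by
  intro hp
  set i := v.length - j
  have hdrop : v.drop j = v.take i := by
    rw [List.prefix_iff_eq_take.mp hp, List.length_drop]
  have hsplit : v.drop j ++ v.drop i = v := by rw [hdrop, List.take_append_drop]
  have hij : v.drop i < v.take j := by
    rw [← List.append_lt_append_left_iff (v.drop j), hsplit]
    exact hv.2 j hj hjv
  have hlen : (v.take j).length ≤ (v.drop i).length := by
    simp only [List.length_take, List.length_drop]; omega
  have hrot : rot v i < v := by
    simpa [rot] using List.append_lt_append_of_length_le hij hlen (v.take i) (v.drop j)
  exact (hv.2 i (by omega) (by omega)).not_gt hrot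

theorem IsLyndon.lt_drop (hv : IsLyndon v) {j : ℕ} (hj : 0 < j) (hjv : j < v.length) :
    v < v.drop j := by
  refine lt_of_not_ge fun hle => ?_
  have hne : v.drop j ≠ v := fun h => by
    have := congrArg List.length h
    simp only [List.length_drop] at this
    omega
  have hrot : rot v j < v := by
    simpa [rot] using List.append_lt_append_of_not_prefix (hle.lt_of_ne hne)
      (hv.not_drop_prefix hj hjv) (v.take j) []
  exact (hv.2 j hj hjv).not_gt hrot

theorem IsLyndon.append_lt_drop_append (hv : IsLyndon v) {j : ℕ} (hj : 0 < j)
    (hjv : j < v.length) (s : List α) : v ++ s < v.drop j ++ s :=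
  List.append_lt_append_of_length_le (hv.lt_drop hj hjv) (by simp) s s

end Lyndon

section Lcp

variable [DecidableEq α]

theorem lcpLen_nil_right : ∀ u : List α, lcpLen u [] = 0
  | [] => rfl
  | _ :: _ => rfl

theorem lcpLen_append_left : ∀ w u v : List α, lcpLen (w ++ u) (w ++ v) = w.length + lcpLen u v
  | [], _, _ => by simp
  | a :: w, u, v => by
    simp only [List.cons_append, lcpLen, if_pos, lcpLen_append_left w u v, List.length_cons]
    omega

theorem take_prefix_of_le_lcpLen :
    ∀ {u v : List α} {n : ℕ}, n ≤ lcpLen u v → u.take n <+: v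
  | _, _, 0, _ => by simp
  | [], _, _ + 1, _ => by simp
  | _ :: _, [], _ + 1, h => by simp [lcpLen] at h
  | a :: u, b :: v, n + 1, h => by
    by_cases hab : a = b
    · subst hab
      simp only [lcpLen, if_pos] at h
      simpa using take_prefix_of_le_lcpLen (u := u) (v := v) (by omega)
    · simp [lcpLen, hab] at h

end Lcp

theorem lcpLen_append_lt_length [LinearOrder α] {u s t : List α} (h : t < u) :
    lcpLen (u ++ s) t < u.length := by
  refine lt_of_not_ge fun hle => ?_
  have hpre : u <+: t := by simpa using take_prefix_of_le_lcpLen hle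
  exact hpre.le h

namespace IsCFL

variable [LinearOrder α] {x u : List α} {g : List (List α)}

theorem isLyndon_head (h : IsCFL x (u :: g)) : IsLyndon u :=
  h.2.1 u List.mem_cons_self

theorem length_head_pos (h : IsCFL x (u :: g)) : 0 < u.length :=
  List.length_pos_iff.mpr h.isLyndon_head.1

theorem append_flatten (h : IsCFL x (u :: g)) : u ++ g.flatten = x := by
  rw [← List.flatten_cons]; exact h.1

theorem take_length_head (h : IsCFL x (u :: g)) : x.take u.length = u := by
  rw [← h.append_flatten, List.take_left]

theorem drop_length_head (h : IsCFL x (u :: g)) : x.drop u.length = g.flatten := by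
  rw [← h.append_flatten, List.drop_left]

theorem append_drop (h : IsCFL x (u :: g)) : u ++ x.drop u.length = x := by
  rw [h.drop_length_head, h.append_flatten]

theorem tail (h : IsCFL x (u :: g)) : IsCFL (x.drop u.length) g := by
  rw [h.drop_length_head]
  exact ⟨rfl, fun y hy => h.2.1 y (List.mem_cons_of_mem u hy), h.2.2.tail⟩

theorem le_head (h : IsCFL x (u :: g)) : ∀ u' ∈ g.head?, u' ≤ u := by
  cases g with
  | nil => simp
  | cons u' g => simpa using (List.isChain_cons_cons.mp h.2.2).1

theorem lt_of_head_lt {v : List α} (hv : IsLyndon v) :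
    ∀ {x : List α} {g : List (List α)}, IsCFL x g → (∀ u ∈ g.head?, u < v) → x < v
  | x, [], h, _ => by
    rw [← h.1]
    exact List.nil_lt_of_ne_nil hv.1
  | x, u :: g, h, hu => by
    have huv : u < v := hu u rfl
    have hrest : x.drop u.length < v :=
      lt_of_head_lt hv h.tail fun u' hu' => (h.le_head u' hu').trans_lt huv
    rw [← h.append_drop]
    by_cases hp : u <+: v
    · obtain ⟨v', rfl⟩ := hp
      have hv' : v' ≠ [] := by rintro rfl; simp at huv
      have hvv' : u ++ v' < v' := by
        simpa using hv.lt_drop h.length_head_pos (by simpa using List.length_pos_iff.mpr hv')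
      exact (List.append_lt_append_left_iff u).mpr (hrest.trans hvv')
    · simpa using List.append_lt_append_of_not_prefix huv hp (x.drop u.length) []

theorem drop_length_head_lt :
    ∀ {x u : List α} {g : List (List α)}, IsCFL x (u :: g) → x.drop u.length < x
  | x, u, [], h => by
    rw [h.drop_length_head, ← h.append_flatten]
    exact List.nil_lt_of_ne_nil (by simpa using h.isLyndon_head.1)
  | x, u, u' :: g, h => by
    rcases (h.le_head u' rfl).lt_or_eq with hlt | rfl
    · calc x.drop u.length < u := h.tail.lt_of_head_lt h.isLyndon_head (by simpa using hlt)
        -- `List.IsPrefix.le` speaks of core's `≤` on lists, which unfolds to `¬ x < u`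
        _ ≤ x := not_lt.mp (h.append_drop ▸ List.prefix_append u _).le
    · calc x.drop u'.length = u' ++ (x.drop u'.length).drop u'.length := h.tail.append_drop.symm
        _ < u' ++ x.drop u'.length :=
          (List.append_lt_append_left_iff u').mpr (drop_length_head_lt h.tail)
        _ = x := h.append_drop

theorem lt_drop_of_lt_length_head (h : IsCFL x (u :: g)) {m : ℕ} (hm : 0 < m)
    (hmu : m < u.length) : x < x.drop m := by
  rw [← h.append_flatten, List.drop_append_of_le_length hmu.le]
  exact h.isLyndon_head.append_lt_drop_append hm hmu _

theorem take_eq_replicate :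
    ∀ {x u : List α} {g : List (List α)}, IsCFL x (u :: g) →
      (u :: g).take (1 + lcpLen x (x.drop u.length) / u.length) =
        List.replicate (1 + lcpLen x (x.drop u.length) / u.length) u
  | x, u, [], h => by simp [h.drop_length_head, lcpLen_nil_right]
  | x, u, u' :: g, h => by
    rcases (h.le_head u' rfl).lt_or_eq with hlt | rfl
    · have hrest : x.drop u.length < u := h.tail.lt_of_head_lt h.isLyndon_head (by simpa using hlt)
      have hlcp : lcpLen x (x.drop u.length) < u.length := by
        simpa [h.append_drop] using lcpLen_append_lt_length (s := x.drop u.length) hrest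
      simp [Nat.div_eq_of_lt hlcp]
    · have hlcp : lcpLen x (x.drop u'.length) =
          u'.length + lcpLen (x.drop u'.length) ((x.drop u'.length).drop u'.length) := by
        rw [← lcpLen_append_left, h.append_drop, h.tail.append_drop]
      rw [hlcp, Nat.add_div_left _ h.length_head_pos, ← add_assoc, List.take_succ_cons,
        h.tail.take_eq_replicate, List.replicate_succ]

end IsCFL

theorem cfl_first_factor_general [LinearOrder α] (w : List α)
    (w₁ : List α) (f' : List (List α)) (hf : IsCFL w (w₁ :: f')) :
    w₁.length = sInf {j : ℕ | 0 < j ∧ w.drop j < w} ∧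
      (w₁ :: f').take (1 + lcpLen w (w.drop w₁.length) / w₁.length) =
        List.replicate (1 + lcpLen w (w.drop w₁.length) / w₁.length)
          (w.take w₁.length) := by
  have hleast : IsLeast {j : ℕ | 0 < j ∧ w.drop j < w} w₁.length :=
    ⟨⟨hf.length_head_pos, hf.drop_length_head_lt⟩, fun m ⟨hm, hmw⟩ =>
      le_of_not_gt fun hmw₁ => (hf.lt_drop_of_lt_length_head hm hmw₁).not_gt hmw⟩
  refine ⟨hleast.csInf_eq.symm, ?_⟩
  rw [hf.take_length_head]
  exact hf.take_eq_replicate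

/-- For `CFL(w) = w₁, …, w_m`: `|w₁| = min { j > 0 : suf(w,j) < w }` and
`w₁ = ⋯ = w_k = w[0..|w₁|-1]` where `k = 1 + ⌊lcp(w, suf(w,|w₁|)) / |w₁|⌋`. -/
theorem cfl_first_factor [LinearOrder α] (w : List α) (hw : w ≠ [])
    (w₁ : List α) (f' : List (List α)) (hf : IsCFL w (w₁ :: f')) :
    w₁.length = sInf {j : ℕ | 0 < j ∧ w.drop j < w} ∧
      (w₁ :: f').take (1 + lcpLen w (w.drop w₁.length) / w₁.length) =
        List.replicate (1 + lcpLen w (w.drop w₁.length) / w₁.length)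
          (w.take w₁.length) :=
  cfl_first_factor_general w w₁ f' hf
end

section
/- Let c̄ be the smallest symbol of Σ, let w be a nonempty word over Σ, and let s = max( { i : w[i] > c̄ } ∪ { -1 } ). Then CFL(w) is the concatenation of CFL(w[0..s]) and CFL(c̄^{|w|-1-s}), i.e., the Lyndon factorization of w consists of the Lyndon factorization of the prefix w[0..s] followed by |w|-1-s factors each equal to the one-symbol word c̄. -/
variable {α : Type*}

section LinearOrder

variable [LinearOrder α]

theorem isLyndon_singleton (a : α) : IsLyndon [a] :=
  ⟨List.cons_ne_nil a [], fun i hi hi' => by rw [List.length_singleton] at hi'; omega⟩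

theorem singleton_le_of_ne_nil {c : α} (hc : ∀ a : α, c ≤ a) {x : List α} (hx : x ≠ []) :
    [c] ≤ x := by
  obtain _ | ⟨a, t⟩ := x
  · exact absurd rfl hx
  rcases (hc a).eq_or_lt with rfl | hlt
  · exact List.cons_le_cons c (not_lt.1 (by rintro ⟨⟩))
  · exact le_of_lt (List.Lex.rel hlt)

theorem isCFL_replicate (a : α) (n : ℕ) :
    IsCFL (List.replicate n a) (List.replicate n [a]) := by
  refine ⟨List.flatten_replicate_singleton, fun x hx => ?_, List.isChain_replicate_of_rel n le_rfl⟩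
  rw [List.eq_of_mem_replicate hx]
  exact isLyndon_singleton a

theorem IsCFL.append {u v : List α} {f g : List (List α)} (hf : IsCFL u f) (hg : IsCFL v g)
    (hle : ∀ x ∈ f.getLast?, ∀ y ∈ g.head?, y ≤ x) : IsCFL (u ++ v) (f ++ g) := by
  obtain ⟨hfu, hfl, hfc⟩ := hf
  obtain ⟨hgv, hgl, hgc⟩ := hg
  refine ⟨by rw [List.flatten_append, hfu, hgv], fun x hx => ?_, hfc.append hgc hle⟩
  rcases List.mem_append.mp hx with hx | hx
  exacts [hfl x hx, hgl x hx]

end LinearOrder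

theorem cfl_strip_smallest_tail_general [LinearOrder α] (cbar : α) (hcbar : ∀ a : α, cbar ≤ a)
    (w p : List α) (n : ℕ)
    (hdecomp : w = p ++ List.replicate n cbar)
    (f : List (List α)) (hf : IsCFL p f) :
    IsCFL w (f ++ List.replicate n [cbar]) := by
  subst hdecomp
  refine hf.append (isCFL_replicate cbar n) fun x hx y hy => ?_
  rw [List.eq_of_mem_replicate (List.mem_of_mem_head? hy)]
  exact singleton_le_of_ne_nil hcbar (hf.2.1 x (List.mem_of_mem_getLast? hx)).1

/-- Factoring out the trailing run of the smallest symbol `c̄`: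
if `w = p · c̄^n` where `p` does not end with `c̄` (i.e. `s = max{i : w[i] > c̄} ∪ {-1}`
and `p = w[0..s]`, `n = |w| - 1 - s`), then `CFL(w) = CFL(p) CFL(c̄^n)`, the latter
being `n` factors each equal to the one-symbol word `c̄`. -/
theorem cfl_strip_smallest_tail [LinearOrder α] (cbar : α) (hcbar : ∀ a : α, cbar ≤ a)
    (w p : List α) (hw : w ≠ []) (n : ℕ)
    (hdecomp : w = p ++ List.replicate n cbar)
    (hlast : ∀ hp : p ≠ [], p.getLast hp ≠ cbar)
    (f : List (List α)) (hf : IsCFL p f) :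
    IsCFL w (f ++ List.replicate n [cbar]) :=
  cfl_strip_smallest_tail_general cbar hcbar w p n hdecomp f hf
end

section
/- Let w be a nonempty word over Σ with Lyndon factorization w₁, w₂, …, w_m and run-length encoding of length ρ. For any 1 ≤ i ≤ ρ, let 1 ≤ j, k ≤ m with j ≤ k be such that a_i^{rle} ∈ [a_j, b_j] and b_i^{rle} ∈ [a_k, b_k]. Then either j = k, or |w_j| = |w_k| = 1. -/
variable {α : Type*}

/-- Starting position `a_j` (0-indexed `j`) of the `j`-th factor of a factorization `f`. -/
def factStart (f : List (List α)) (j : ℕ) : ℕ := ((f.take j).map List.length).sum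

/-- Starting position `a_i^{rle}` (0-indexed `i`) of the `i`-th run of an RLE sequence `R`. -/
def rleStart (R : List (α × ℕ)) (i : ℕ) : ℕ := ((R.take i).map Prod.snd).sum

/-- The word encoded by an RLE sequence. -/
def rleWord (R : List (α × ℕ)) : List α :=
  (R.map (fun p => List.replicate p.2 p.1)).flatten


/-!
The run covers the last letter of `w_j` and the first letter of `w_k`, so both equal the run's
letter `c`. A Lyndon word of length at least two is smaller than each of its proper suffixes, in
particular than its last letter `[c]`; and `[c] ≤ w_k ≤ w_j` since `[c]` is a prefix of `w_k`.
Hence `w_j = [c]`, and then `w_k`, which starts with `c` and is at most `[c]`, is `[c]` as well.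
-/

lemma drop_factStart_flatten (L : List (List α)) (j : ℕ) :
    L.flatten.drop (factStart L j) = (L.drop j).flatten := by
  rw [factStart, List.map_take, List.drop_sum_flatten]

lemma getElem?_flatten_factStart_add {L : List (List α)} {j p : ℕ} (hj : j < L.length)
    (hp : p < L[j].length) : L.flatten[factStart L j + p]? = L[j][p]? := by
  rw [← List.getElem?_drop, drop_factStart_flatten, List.drop_eq_getElem_cons hj,
    List.flatten_cons, List.getElem?_append_left hp]

lemma factStart_add_length_le {L : List (List α)} {j k : ℕ} (hj : j < L.length) (hjk : j < k) :
    factStart L j + L[j].length ≤ factStart L k := by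
  have hsucc : factStart L (j + 1) = factStart L j + L[j].length := by
    rw [factStart, factStart, List.take_add_one, List.getElem?_eq_getElem hj]
    simp only [Option.toList_some, List.map_append, List.sum_append, List.map_singleton,
      List.sum_singleton]
  have hmono : factStart L (j + 1) ≤ factStart L k :=
    ((List.take_sublist_take_left hjk).map _).sum_le_sum fun _ _ => Nat.zero_le _
  omega

lemma rleStart_eq_factStart (R : List (α × ℕ)) (i : ℕ) :
    rleStart R i = factStart (R.map fun p => List.replicate p.2 p.1) i := by
  simp only [rleStart, factStart, ← List.map_take, List.map_map, Function.comp_def,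
    List.length_replicate]

lemma getElem?_rleWord_of_le_of_lt {R : List (α × ℕ)} {i n : ℕ} (hi : i < R.length)
    (h₁ : rleStart R i ≤ n) (h₂ : n < rleStart R i + R[i].2) :
    (rleWord R)[n]? = some R[i].1 := by
  obtain ⟨t, rfl⟩ := Nat.exists_eq_add_of_le h₁
  rw [rleWord, rleStart_eq_factStart,
    getElem?_flatten_factStart_add (by simpa using hi) (by simp; omega)]
  simp [List.getElem?_replicate_of_lt (Nat.lt_of_add_lt_add_left h₂)]

namespace List

theorem isPrefix_or_append_lt_append_of_lt [LT α] {u v : List α} (h : u < v) :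
    u <+: v ∨ ∀ x y : List α, u ++ x < v ++ y := by
  induction h with
  | nil => exact .inl nil_prefix
  | rel hab => exact .inr fun _ _ => .rel hab
  | cons _ ih =>
    rcases ih with hp | hs
    · exact .inl (cons_prefix_cons.mpr ⟨rfl, hp⟩)
    · exact .inr fun x y => .cons (hs x y)

theorem lt_of_append_lt_append_left [Preorder α] {u x y : List α} (h : u ++ x < u ++ y) :
    x < y := by
  induction u with
  | nil => exact h
  | cons a l ih => exact ih (lex_cons_iff.mp h)

end List

section Lyndon

variable [LinearOrder α]

theorem IsLyndon.lt_drop_s14 {u : List α} (hu : IsLyndon u) {i : ℕ} (h0 : 0 < i)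
    (hi : i < u.length) : u < u.drop i := by
  by_contra! hle
  have hrot : u < u.drop i ++ u.take i := hu.2 i h0 hi
  have hlt : u.drop i < u := lt_of_le_of_ne hle fun h => by
    have := congrArg List.length h; simp at this; omega
  -- If `u = u.drop i ++ r`, the rotations by `i` and by `u.length - i` give `r < u.take i` and
  -- `u < r ++ u.drop i`, incompatible since `r` and `u.take i` have the same length.
  rcases List.isPrefix_or_append_lt_append_of_lt hlt with ⟨r, hr⟩ | hdiff
  · have hr_len : r.length = i := by
      have := congrArg List.length hr; simp at this; omega
    have hrot' : u < r ++ u.drop i := by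
      have hlen : (u.drop i).length = u.length - i := List.length_drop
      have hd := List.drop_left' (l₂ := r) hlen
      have ht := List.take_left' (l₂ := r) hlen
      rw [hr] at hd ht
      simpa [rot, hd, ht] using hu.2 (u.length - i) (by omega) (by omega)
    have hr_lt : r < u.take i := List.lt_of_append_lt_append_left (by rwa [hr])
    rcases List.isPrefix_or_append_lt_append_of_lt hr_lt with hpre | hr_diff
    · exact hr_lt.ne (hpre.eq_of_length (by simp; omega))
    · exact lt_asymm hrot' (by simpa using hr_diff (u.drop i) (u.drop i))
  · exact lt_asymm hrot (by simpa using hdiff (u.take i) [])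

theorem IsLyndon.length_eq_one_of_le_of_getLast?_eq_head? {u v : List α} (hu : IsLyndon u)
    (hv : IsLyndon v) (hvu : v ≤ u) (h : u.getLast? = v.head?) :
    u.length = 1 ∧ v.length = 1 := by
  obtain ⟨c, t, rfl⟩ := List.exists_cons_of_ne_nil hv.1
  obtain ⟨s, rfl⟩ := List.getLast?_eq_some_iff.mp h
  have hcv : [c] ≤ c :: t := le_of_not_gt (List.IsPrefix.le ⟨t, rfl⟩)
  obtain rfl : s = [] := by
    by_contra hs
    have hlt : s ++ [c] < [c] := by
      simpa using hu.lt_drop_s14 (i := s.length) (List.length_pos_iff.mpr hs) (by simp)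
    exact lt_irrefl _ (hlt.trans_le (hcv.trans hvu))
  obtain rfl : t = [] := by
    rcases t with _ | ⟨a, t⟩
    · rfl
    have hlt : [c] < c :: a :: t := List.append_left_lt (l₁ := [c]) (List.nil_lt_cons a t)
    exact absurd hvu (not_le.mpr hlt)
  simp

end Lyndon

theorem rle_run_vs_cfl_general [LinearOrder α] (w : List α)
    (f : List (List α)) (hf : IsCFL w f)
    (R : List (α × ℕ)) (hRw : rleWord R = w)
    (i j k : ℕ) (hi : i < R.length) (hj : j < f.length) (hk : k < f.length)
    (hjk : j ≤ k)
    (hja : factStart f j ≤ rleStart R i ∧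
      rleStart R i ≤ factStart f j + (f.get ⟨j, hj⟩).length - 1)
    (hkb : factStart f k ≤ rleStart R i + (R.get ⟨i, hi⟩).2 - 1 ∧
      rleStart R i + (R.get ⟨i, hi⟩).2 - 1 ≤ factStart f k + (f.get ⟨k, hk⟩).length - 1) :
    j = k ∨ ((f.get ⟨j, hj⟩).length = 1 ∧ (f.get ⟨k, hk⟩).length = 1) := by
  simp only [List.get_eq_getElem] at hja hkb ⊢
  obtain ⟨hflat, hlyn, hchain⟩ := hf
  refine or_iff_not_imp_left.mpr fun hne => ?_
  have hlt : j < k := lt_of_le_of_ne hjk hne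
  have hgap := factStart_add_length_le hj hlt
  have hj_pos : 0 < f[j].length := List.length_pos_iff.mpr (hlyn _ (List.getElem_mem hj)).1
  have hrun : ∀ n, rleStart R i ≤ n → n < rleStart R i + R[i].2 → w[n]? = some R[i].1 :=
    fun n h₁ h₂ => hRw ▸ getElem?_rleWord_of_le_of_lt hi h₁ h₂
  have hlast : f[j].getLast? = some R[i].1 := by
    rw [List.getLast?_eq_getElem?, ← getElem?_flatten_factStart_add hj (by omega), hflat]
    exact hrun _ (by omega) (by omega)
  have hhead : f[k].head? = some R[i].1 := by
    rw [List.head?_eq_getElem?, ← getElem?_flatten_factStart_add hk (p := 0) (by omega), hflat]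
    exact hrun _ (by omega) (by omega)
  have hle : f[k] ≤ f[j] :=
    List.pairwise_iff_getElem.mp (List.isChain_iff_pairwise.mp hchain) j k hj hk hlt
  exact (hlyn _ (List.getElem_mem hj)).length_eq_one_of_le_of_getLast?_eq_head?
    (hlyn _ (List.getElem_mem hk)) hle (hlast.trans hhead.symm)

/-- A run of the RLE either lies inside a single Lyndon factor, or the factors it
meets at its two endpoints are both of length 1. -/
theorem rle_run_vs_cfl [LinearOrder α] (w : List α) (hw : w ≠ [])
    (f : List (List α)) (hf : IsCFL w f)
    (R : List (α × ℕ)) (hR1 : ∀ p ∈ R, 1 ≤ p.2)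
    (hR2 : R.Chain' (fun p q => p.1 ≠ q.1)) (hRw : rleWord R = w)
    (i j k : ℕ) (hi : i < R.length) (hj : j < f.length) (hk : k < f.length)
    (hjk : j ≤ k)
    (hja : factStart f j ≤ rleStart R i ∧
      rleStart R i ≤ factStart f j + (f.get ⟨j, hj⟩).length - 1)
    (hkb : factStart f k ≤ rleStart R i + (R.get ⟨i, hi⟩).2 - 1 ∧
      rleStart R i + (R.get ⟨i, hi⟩).2 - 1 ≤ factStart f k + (f.get ⟨k, hk⟩).length - 1) :
    j = k ∨ ((f.get ⟨j, hj⟩).length = 1 ∧ (f.get ⟨k, hk⟩).length = 1) :=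
  rle_run_vs_cfl_general w f hf R hRw i j k hi hj hk hjk hja hkb
end
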